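/- (Explicit form of the PGPB update.) Let A be a finite nonempty set, θ₀ ∈ ℝⁿ, q : ℝⁿ → A → ℝ with θ ↦ q θ a differentiable at θ₀ for all a, π_θ the softmax policy of q, H(θ) = − Σ_u π_θ(u) log π_θ(u), and T̂ : A → ℝ. Then for every a ∈ A, with Δ_R = T̂(a) − q θ₀ a: (T̂(a) − q θ₀ a) ∇_θ log π_θ(a)|_{θ₀} − ∇_θ H(θ₀) = Δ_R ( ∇_θ q θ a |_{θ₀} − Σ_u π_{θ₀}(u) ∇_θ q θ u |_{θ₀} ) + Σ_u q θ₀ u · ∇_θ π_θ(u)|_{θ₀}. -/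

import Mathlib

/-!
Both gradients follow from the log-sum-exp form of the softmax policy. Since
`log π_θ(a) = q θ a - log Σ_u exp (q θ u)` and the gradient of the log-partition function is the
`π_θ`-average of the logit gradients, `∇ log π_θ(a) = ∇ q θ a - Σ_u π_θ(u) ∇ q θ u`. For the
entropy, `H(θ) = log Σ_u exp (q θ u) - Σ_u π_θ(u) q θ u`; differentiating the second sum by the
product rule produces the same average of logit gradients, which cancels against the gradient of
the log-partition function and leaves `∇ H = -Σ_u q θ u ∇ π_θ(u)`.
-/

noncomputable section

open Real Finset

variable {A : Type*} [Fintype A]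

def softmax (z : A → ℝ) (a : A) : ℝ :=
  exp (z a) / ∑ u, exp (z u)

def entropy (p : A → ℝ) : ℝ :=
  -∑ u, p u * log (p u)

section Softmax

variable [Nonempty A]

lemma sum_exp_pos (z : A → ℝ) : 0 < ∑ u, exp (z u) :=
  sum_pos (fun u _ => exp_pos (z u)) univ_nonempty

lemma sum_softmax (z : A → ℝ) : ∑ u, softmax z u = 1 := by
  simp only [softmax, ← sum_div]
  exact div_self (sum_exp_pos z).ne'

lemma log_softmax (z : A → ℝ) (a : A) :
    log (softmax z a) = z a - log (∑ u, exp (z u)) := by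
  rw [softmax, log_div (exp_ne_zero _) (sum_exp_pos z).ne', log_exp]

lemma entropy_softmax (z : A → ℝ) :
    entropy (softmax z) = log (∑ u, exp (z u)) - ∑ u, softmax z u * z u := by
  simp only [entropy, log_softmax, mul_sub, sum_sub_distrib, ← sum_mul, sum_softmax]
  ring

end Softmax

section Gradients

variable {E : Type*} [NormedAddCommGroup E] [NormedSpace ℝ E] {q : E → A → ℝ} {x : E}

lemma hasFDerivAt_sum_exp (hq : ∀ u, DifferentiableAt ℝ (fun θ => q θ u) x) :
    HasFDerivAt (fun θ => ∑ u, exp (q θ u))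
      (∑ u, exp (q x u) • fderiv ℝ (fun θ => q θ u) x) x :=
  HasFDerivAt.fun_sum fun u _ => (hq u).hasFDerivAt.exp

variable [Nonempty A]

lemma hasFDerivAt_log_sum_exp (hq : ∀ u, DifferentiableAt ℝ (fun θ => q θ u) x) :
    HasFDerivAt (fun θ => log (∑ u, exp (q θ u)))
      (∑ u, softmax (q x) u • fderiv ℝ (fun θ => q θ u) x) x := by
  refine ((hasFDerivAt_sum_exp hq).log (sum_exp_pos (q x)).ne').congr_fderiv ?_
  simp only [softmax, smul_sum, smul_smul, div_eq_inv_mul]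

lemma hasFDerivAt_log_softmax (hq : ∀ u, DifferentiableAt ℝ (fun θ => q θ u) x) (a : A) :
    HasFDerivAt (fun θ => log (softmax (q θ) a))
      (fderiv ℝ (fun θ => q θ a) x - ∑ u, softmax (q x) u • fderiv ℝ (fun θ => q θ u) x) x := by
  simp only [log_softmax]
  exact (hq a).hasFDerivAt.sub (hasFDerivAt_log_sum_exp hq)

lemma differentiableAt_softmax (hq : ∀ u, DifferentiableAt ℝ (fun θ => q θ u) x) (a : A) :
    DifferentiableAt ℝ (fun θ => softmax (q θ) a) x := by
  simp only [softmax, div_eq_mul_inv]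
  exact (hq a).exp.fun_mul ((hasFDerivAt_sum_exp hq).differentiableAt.fun_inv (sum_exp_pos (q x)).ne')

lemma hasFDerivAt_entropy_softmax (hq : ∀ u, DifferentiableAt ℝ (fun θ => q θ u) x) :
    HasFDerivAt (fun θ => entropy (softmax (q θ)))
      (-∑ u, q x u • fderiv ℝ (fun θ => softmax (q θ) u) x) x := by
  simp only [entropy_softmax]
  have hmean := HasFDerivAt.fun_sum (u := univ) fun u _ =>
    (differentiableAt_softmax hq u).hasFDerivAt.fun_mul (hq u).hasFDerivAt
  refine ((hasFDerivAt_log_sum_exp hq).sub hmean).congr_fderiv ?_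
  rw [sum_add_distrib]
  abel

end Gradients

end

theorem pgpb_explicit_form_general
    {n : ℕ} {A : Type*} [Fintype A]
    (θ₀ : EuclideanSpace ℝ (Fin n))
    (q : EuclideanSpace ℝ (Fin n) → A → ℝ)
    (hq : ∀ u : A, DifferentiableAt ℝ (fun θ => q θ u) θ₀)
    (π : EuclideanSpace ℝ (Fin n) → A → ℝ)
    (hπ : ∀ θ (a : A), π θ a = Real.exp (q θ a) / ∑ u : A, Real.exp (q θ u))
    (H : EuclideanSpace ℝ (Fin n) → ℝ)
    (hH : ∀ θ, H θ = -∑ u : A, π θ u * Real.log (π θ u))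
    (That : A → ℝ) :
    ∀ a : A,
      (That a - q θ₀ a) • gradient (fun θ => Real.log (π θ a)) θ₀ -
        gradient H θ₀ =
      (That a - q θ₀ a) •
          (gradient (fun θ => q θ a) θ₀ -
            ∑ u : A, π θ₀ u • gradient (fun θ => q θ u) θ₀) +
        ∑ u : A, q θ₀ u • gradient (fun θ => π θ u) θ₀ := by
  intro a
  have : Nonempty A := ⟨a⟩
  obtain rfl : π = fun θ => softmax (q θ) := funext fun θ => funext (hπ θ)
  obtain rfl : H = fun θ => entropy (softmax (q θ)) := funext hH
  simp only [gradient, (hasFDerivAt_log_softmax hq a).fderiv,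
    (hasFDerivAt_entropy_softmax hq).fderiv, map_sub, map_neg, map_sum, map_smul]
  abel

/-- Explicit form of the PGPB update in terms of the logits: the PGPB estimator
`(T̂(a) − q_{θ₀}(a)) • ∇ log π_θ(a) − ∇ H(θ₀)` equals
`Δ_R • (∇ q(a) − Σ_u π_{θ₀}(u) • ∇ q(u)) + Σ_u q θ₀ u • ∇ π_θ(u)`. -/
theorem pgpb_explicit_form
    {n : ℕ} {A : Type*} [Fintype A] [Nonempty A]
    (θ₀ : EuclideanSpace ℝ (Fin n))
    (q : EuclideanSpace ℝ (Fin n) → A → ℝ)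
    (hq : ∀ u : A, DifferentiableAt ℝ (fun θ => q θ u) θ₀)
    (π : EuclideanSpace ℝ (Fin n) → A → ℝ)
    (hπ : ∀ θ (a : A), π θ a = Real.exp (q θ a) / ∑ u : A, Real.exp (q θ u))
    (H : EuclideanSpace ℝ (Fin n) → ℝ)
    (hH : ∀ θ, H θ = -∑ u : A, π θ u * Real.log (π θ u))
    (That : A → ℝ) :
    ∀ a : A,
      (That a - q θ₀ a) • gradient (fun θ => Real.log (π θ a)) θ₀ -
        gradient H θ₀ =
      (That a - q θ₀ a) •
          (gradient (fun θ => q θ a) θ₀ -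
            ∑ u : A, π θ₀ u • gradient (fun θ => q θ u) θ₀) +
        ∑ u : A, q θ₀ u • gradient (fun θ => π θ u) θ₀ :=
  pgpb_explicit_form_general θ₀ q hq π hπ H hH That
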